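/- For the n-dimensional hypercube Q_n and any integer m with 2 ≤ m ≤ n+1, the minimum m-vertex boundary number satisfies b_v(m; Q_n) = −m²/2 + (n − 1/2)m + 1. -/

import Mathlib

/-- The `n`-dimensional hypercube: vertices are binary strings of length `n`,
adjacent iff they differ in exactly one coordinate. -/
def Qube (n : ℕ) : SimpleGraph (Fin n → Bool) where
  Adj u v := hammingDist u v = 1
  symm := ⟨fun u v h => by show hammingDist v u = 1; rwa [hammingDist_comm]⟩
  loopless := ⟨fun u h => by simp only [hammingDist_self] at h; exact absurd h (by norm_num)⟩

instance (n : ℕ) : DecidableRel (Qube n).Adj :=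
  fun u v => inferInstanceAs (Decidable (hammingDist u v = 1))

/-- The vertex boundary of a vertex set `H` in `Qube n`. -/
def vBoundary (n : ℕ) (H : Finset (Fin n → Bool)) : Finset (Fin n → Bool) :=
  Finset.univ.filter (fun v => v ∉ H ∧ ∃ u ∈ H, (Qube n).Adj u v)

/-- The minimum `m`-vertex boundary number of `Qube n`. -/
noncomputable def bv (n m : ℕ) : ℕ :=
  sInf { k | ∃ H : Finset (Fin n → Bool), H.card = m ∧ (vBoundary n H).card = k }

/-- The hypercube with a vertex set `S` deleted. -/
def QDel (n : ℕ) (S : Finset (Fin n → Bool)) :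
    SimpleGraph ((↑(Sᶜ) : Set (Fin n → Bool))) :=
  (Qube n).induce (↑(Sᶜ) : Set (Fin n → Bool))

/-- The `k`-extra connectivity of `Qube n`: the minimum size of a vertex set `T`
such that `Qube n − T` is disconnected and every component has at least `k+1` vertices. -/
noncomputable def extraConn (n k : ℕ) : ℕ :=
  sInf { t | ∃ T : Finset (Fin n → Bool), T.card = t ∧
    ¬ (QDel n T).Connected ∧
    ∀ c : (QDel n T).ConnectedComponent,
      k + 1 ≤ {v | (QDel n T).connectedComponentMk v = c}.ncard }

/-!
The lower bound `2mn + 2 ≤ m² + m + 2|N(H)|` is proved by induction on the dimension. If `|H| ≥ 2`,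
choose a coordinate `i` on which two points of `H` differ and cut `H` into its two nonempty slices
`xᵢ = 0` and `xᵢ = 1`, of sizes `a + b = |H|`. The boundary of each slice inside its subcube lifts
into `N(H)`, the two lifts are disjoint, and the bounds for the slices in dimension `n - 1` add up
to the bound for `H` because `(a - 1)(b - 1) ≥ 0`.

The bound is attained by the star `{0} ∪ {eₐ : a ∈ S}` with `|S| = m - 1`: its boundary consists
of the `eⱼ` with `j ∉ S` and the `eₐ + eⱼ` with `a ∈ S`, that is
`(n - m + 1) + C(n, 2) - C(n - m + 1, 2)` vertices.
-/

open Finset Function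

namespace Hypercube

section

variable {ι : Type*} [DecidableEq ι]

def lift (i : ι) (c : Bool) (w : {j // j ≠ i} → Bool) : ι → Bool :=
  (Equiv.funSplitAt i Bool).symm (c, w)

@[simp]
lemma lift_apply_self (i : ι) (c : Bool) (w : {j // j ≠ i} → Bool) : lift i c w i = c := by
  simp [lift]

@[simp]
lemma lift_apply_coe {i : ι} (c : Bool) (w : {j // j ≠ i} → Bool) (j : {j // j ≠ i}) :
    lift i c w j = w j := by
  simp [lift, j.2]

lemma lift_restrict (x : ι → Bool) (i : ι) : lift i (x i) (fun j => x j) = x :=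
  (Equiv.funSplitAt i Bool).symm_apply_apply x

lemma lift_injective (i : ι) (c : Bool) : Injective (lift i c) := fun _ _ h =>
  congrArg Prod.snd ((Equiv.funSplitAt i Bool).symm.injective h)

lemma range_lift (i : ι) (c : Bool) : Set.range (lift i c) = {x | x i = c} := by
  ext x
  refine ⟨?_, fun (hx : x i = c) => ⟨fun j => x j, hx ▸ lift_restrict x i⟩⟩
  rintro ⟨w, rfl⟩
  exact lift_apply_self i c w

noncomputable def slice (H : Finset (ι → Bool)) (i : ι) (c : Bool) :
    Finset ({j // j ≠ i} → Bool) :=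
  H.preimage (lift i c) (lift_injective i c).injOn

lemma slice_nonempty {H : Finset (ι → Bool)} {x : ι → Bool} (hx : x ∈ H) (i : ι) :
    (slice H i (x i)).Nonempty :=
  ⟨fun j => x j, by simpa [slice, lift_restrict] using hx⟩

def ofFinset (s : Finset ι) : ι → Bool := fun i => decide (i ∈ s)

lemma ofFinset_injective : Injective (ofFinset (ι := ι)) := fun s t h => by
  ext i
  simpa [ofFinset] using congrFun h i

lemma update_ofFinset (s : Finset ι) (j : ι) :
    update (ofFinset s) j (!ofFinset s j) = ofFinset (symmDiff s {j}) := by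
  funext k
  by_cases hk : k = j
  · subst hk; simp [ofFinset, mem_symmDiff]
  · simp [ofFinset, mem_symmDiff, hk]

variable [Fintype ι]

lemma hammingDist_lift (i : ι) (c : Bool) (u w : {j // j ≠ i} → Bool) :
    hammingDist (lift i c u) (lift i c w) = hammingDist u w := by
  simp only [hammingDist, card_filter]
  rw [Fintype.sum_eq_add_sum_subtype_ne _ i]
  simp

end

variable {ι : Type*} [Fintype ι] [DecidableEq ι]

lemma hammingDist_eq_one_iff {u v : ι → Bool} :
    hammingDist u v = 1 ↔ ∃ j, v = update u j (!u j) := by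
  unfold hammingDist
  rw [card_eq_one]
  refine exists_congr fun j => ⟨fun h => ?_, ?_⟩
  · have hdiff : ∀ k, u k ≠ v k ↔ k = j := by simpa [Finset.ext_iff] using h
    funext k
    by_cases hk : k = j
    · subst hk
      have := (hdiff k).2 rfl
      cases hu : u k <;> cases hv : v k <;> simp_all
    · simpa [hk, eq_comm] using (not_congr (hdiff k)).2 hk
  · rintro rfl
    ext k
    by_cases hk : k = j <;> simp [hk]

def boundary (H : Finset (ι → Bool)) : Finset (ι → Bool) :=
  {v | v ∉ H ∧ ∃ u ∈ H, hammingDist u v = 1}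

lemma mem_boundary {H : Finset (ι → Bool)} {v : ι → Bool} :
    v ∈ boundary H ↔ v ∉ H ∧ ∃ u ∈ H, hammingDist u v = 1 := by
  simp [boundary]

lemma lift_mem_boundary {H : Finset (ι → Bool)} {i : ι} {c : Bool} {w : {j // j ≠ i} → Bool}
    (hw : w ∈ boundary (slice H i c)) : lift i c w ∈ boundary H := by
  obtain ⟨hwH, u, huH, hu⟩ := mem_boundary.1 hw
  simp only [slice, mem_preimage] at hwH huH
  exact mem_boundary.2 ⟨hwH, _, huH, by rwa [hammingDist_lift]⟩

lemma card_slice_false_add_card_slice_true (H : Finset (ι → Bool)) (i : ι) :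
    (slice H i false).card + (slice H i true).card = H.card := by
  classical
  simp only [slice, card_preimage, range_lift, Set.mem_ofPred_eq]
  simpa using card_filter_add_card_filter_not (s := H) (fun x => x i = false)

lemma card_boundary_slice_false_add_card_boundary_slice_true_le (H : Finset (ι → Bool)) (i : ι) :
    (boundary (slice H i false)).card + (boundary (slice H i true)).card ≤ (boundary H).card := by
  rw [← card_image_of_injective _ (lift_injective i false),
    ← card_image_of_injective _ (lift_injective i true), ← card_union_of_disjoint]
  · refine card_le_card (union_subset ?_ ?_) <;>
      exact image_subset_iff.2 fun w hw => lift_mem_boundary hw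
  · refine disjoint_left.2 fun x hx hx' => ?_
    obtain ⟨_, _, rfl⟩ := mem_image.1 hx
    obtain ⟨_, _, h⟩ := mem_image.1 hx'
    simpa using congrFun h i

lemma card_le_card_boundary_singleton (x : ι → Bool) :
    Fintype.card ι ≤ (boundary {x}).card := by
  rw [← card_univ]
  refine card_le_card_of_injOn (fun i => update x i (!x i)) (fun i _ => ?_) (fun i _ j _ h => ?_)
  · refine mem_boundary.2 ⟨fun h => ?_, x, mem_singleton_self x, hammingDist_eq_one_iff.2 ⟨i, rfl⟩⟩
    simpa using congrFun (mem_singleton.1 h) i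
  · by_contra hij
    simpa [hij] using congrFun h i

theorem le_card_boundary {H : Finset (ι → Bool)} (hH : H.Nonempty)
    (hcard : H.card ≤ Fintype.card ι + 1) :
    2 * H.card * Fintype.card ι + 2 ≤ H.card ^ 2 + H.card + 2 * (boundary H).card := by
  induction hn : Fintype.card ι using Nat.strong_induction_on generalizing ι with
  | _ n ih =>
  obtain ⟨x, rfl⟩ | ⟨x, hx, y, hy, hxy⟩ := hH.exists_eq_singleton_or_nontrivial
  · have := card_le_card_boundary_singleton x
    simp only [card_singleton]
    omega
  obtain ⟨i, hi⟩ := Function.ne_iff.1 hxy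
  have hne : ∀ c, (slice H i c).Nonempty := fun c => by
    by_cases hc : x i = c
    · exact hc ▸ slice_nonempty hx i
    · obtain rfl : y i = c := by revert hi hc; cases x i <;> cases y i <;> cases c <;> simp
      exact slice_nonempty hy i
  have hn' : Fintype.card {j // j ≠ i} = n - 1 := by simp [hn]
  have hpos : 0 < n := hn ▸ Fintype.card_pos_iff.2 ⟨i⟩
  have hsplit := card_slice_false_add_card_slice_true H i
  have hbdry := card_boundary_slice_false_add_card_boundary_slice_true_le H i
  have ha := (hne false).card_pos
  have hb := (hne true).card_pos
  have ih0 := ih (n - 1) (by omega) (hne false) (by omega) hn'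
  have ih1 := ih (n - 1) (by omega) (hne true) (by omega) hn'
  set a := (slice H i false).card
  set b := (slice H i true).card
  obtain ⟨k, rfl⟩ : ∃ k, n = k + 1 := ⟨n - 1, by omega⟩
  rw [Nat.add_sub_cancel] at ih0 ih1
  have hab : a + b ≤ a * b + 1 := by nlinarith
  rw [← hsplit]
  linarith

def star (S : Finset ι) : Finset (ι → Bool) :=
  (insert ∅ (S.powersetCard 1)).image ofFinset

lemma card_star (S : Finset ι) : (star S).card = S.card + 1 := by
  rw [star, card_image_of_injective _ ofFinset_injective,
    card_insert_of_notMem (by simp), card_powersetCard, Nat.choose_one_right]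

lemma boundary_star_subset (S : Finset ι) :
    boundary (star S) ⊆
      ((univ.powersetCard 1 \ S.powersetCard 1) ∪ (univ.powersetCard 2 \ Sᶜ.powersetCard 2)).image
        ofFinset := by
  intro v hv
  obtain ⟨hvH, u, huH, hu⟩ := mem_boundary.1 hv
  obtain ⟨s, hs, rfl⟩ := mem_image.1 huH
  obtain ⟨j, rfl⟩ := hammingDist_eq_one_iff.1 hu
  rw [update_ofFinset] at hvH ⊢
  refine mem_image_of_mem _ ?_
  have hnot : symmDiff s {j} ∉ insert ∅ (S.powersetCard 1) := fun h => hvH (mem_image_of_mem _ h)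
  rcases mem_insert.1 hs with rfl | hs
  · rw [← bot_eq_empty, bot_symmDiff] at hnot ⊢
    simp_all
  · obtain ⟨a, rfl⟩ := card_eq_one.1 (mem_powersetCard.1 hs).2
    have ha : a ∈ S := by simpa using hs
    have hja : j ≠ a := by
      rintro rfl
      simp at hnot
    have hpair : symmDiff {a} {j} = ({a, j} : Finset ι) := by
      ext k
      simp only [mem_symmDiff, mem_singleton, mem_insert]
      grind
    rw [hpair]
    refine mem_union_right _ (mem_sdiff.2 ⟨?_, fun h => ?_⟩)
    · simpa using card_pair hja.symm
    · simpa [ha] using (mem_powersetCard.1 h).1 (mem_insert_self a {j})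

lemma card_boundary_star_le (S : Finset ι) :
    2 * (boundary (star S)).card + (S.card + 1) ^ 2 + (S.card + 1) ≤
      2 * (S.card + 1) * Fintype.card ι + 2 := by
  have h := (card_le_card (boundary_star_subset S)).trans (card_image_le.trans (card_union_le _ _))
  rw [card_sdiff_of_subset (powersetCard_mono (subset_univ _)),
    card_sdiff_of_subset (powersetCard_mono (subset_univ _)), card_powersetCard, card_powersetCard,
    card_powersetCard, card_powersetCard, card_compl, card_univ, Nat.choose_one_right,
    Nat.choose_one_right] at h
  have hS : S.card ≤ Fintype.card ι := card_le_univ S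
  have hchoose := Nat.choose_le_choose 2 (Nat.sub_le (Fintype.card ι) S.card)
  qify [hS, hchoose] at h ⊢
  rw [Nat.cast_choose_two, Nat.cast_choose_two, Nat.cast_sub hS] at h
  linarith

end Hypercube

lemma vBoundary_eq_boundary (n : ℕ) (H : Finset (Fin n → Bool)) :
    vBoundary n H = Hypercube.boundary H :=
  rfl

theorem stmt6 (n m : ℕ) (h1 : 2 ≤ m) (h2 : m ≤ n + 1) :
    2 * (bv n m : ℤ) = -(m : ℤ)^2 + (2 * n - 1) * m + 2 := by
  obtain ⟨S, -, hS⟩ := (univ : Finset (Fin n)).exists_subset_card_eq (n := m - 1) (by simp; omega)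
  have hstar : (vBoundary n (Hypercube.star S)).card ∈
      {k | ∃ H : Finset (Fin n → Bool), H.card = m ∧ (vBoundary n H).card = k} :=
    ⟨_, by rw [Hypercube.card_star, hS]; omega, rfl⟩
  have hupper : bv n m ≤ _ := Nat.sInf_le hstar
  obtain ⟨H, hH, hbv⟩ : bv n m ∈ _ := Nat.sInf_mem ⟨_, hstar⟩
  have hlower := Hypercube.le_card_boundary (H := H) (card_pos.1 (by omega)) (by simp; omega)
  have hstar_le := Hypercube.card_boundary_star_le S
  rw [vBoundary_eq_boundary] at hupper hbv
  rw [hH, hbv, Fintype.card_fin] at hlower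
  rw [hS, Nat.sub_add_cancel (by omega), Fintype.card_fin] at hstar_le
  have hbv_eq : 2 * bv n m + m ^ 2 + m = 2 * m * n + 2 := by omega
  have hbv_int : (2 * bv n m + m ^ 2 + m : ℤ) = 2 * m * n + 2 := by exact_mod_cast hbv_eq
  linear_combination hbv_int
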